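/- arXiv:2208.03073 — 2 statements merged into one kernel-verified Lean document; each statement's English description precedes it below -/
import Mathlib

section
/- Let R be a commutative ring of characteristic p (p a prime, with p·1 = 0 in R). For every invertible R-module L, the base change of L along the Frobenius endomorphism x ↦ x^p of R is R-linearly isomorphic to the p-fold tensor power L^{⊗p} of L over R. -/
open scoped TensorProduct

universe u

/-- The codomain of a ring homomorphism `f : R →+* S`, viewed as an `R`-algebra via `f`,
so that `Along f ⊗[R] L` is the base change of an `R`-module `L` along `f`. -/
def Along {R S : Type*} [CommRing R] [CommRing S] (_f : R →+* S) : Type _ := S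

instance {R S : Type*} [CommRing R] [CommRing S] (f : R →+* S) : CommRing (Along f) :=
  inferInstanceAs (CommRing S)

instance {R S : Type*} [CommRing R] [CommRing S] (f : R →+* S) : Algebra R (Along f) :=
  RingHom.toAlgebra f

/-- `L` is an invertible `R`-module, i.e. it admits a tensor inverse `M`. -/
def IsInvertibleModule (R : Type u) (L : Type u) [CommRing R] [AddCommGroup L] [Module R L] :
    Prop :=
  ∃ (M : Type u) (_ : AddCommGroup M) (_ : Module R M), Nonempty ((L ⊗[R] M) ≃ₗ[R] R)

/-- The Frobenius endomorphism `x ↦ x ^ p` of a commutative ring `R` in which `p • 1 = 0`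
(`p` a prime). -/
def pthPowerHom (R : Type u) [CommRing R] (p : ℕ) (hp : p.Prime) (hchar : (p : R) = 0) :
    R →+* R where
  toFun x := x ^ p
  map_one' := one_pow p
  map_mul' x y := mul_pow x y p
  map_zero' := zero_pow hp.ne_zero
  map_add' x y := by
    obtain ⟨r, hr⟩ := exists_add_pow_prime_eq hp x y
    show (x + y) ^ p = x ^ p + y ^ p
    rw [hr, hchar, zero_mul, zero_mul, zero_mul, add_zero]

/-!
For invertible `L` the swap of `L ⊗ L` is the identity (`Module.Invertible.tmul_comm`), so
`φ x • y = φ y • x` for `φ ∈ Lᵛ`. Choose `φᵢ, xᵢ` with `∑ φᵢ xᵢ = 1`; in characteristic `p` also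
`∑ (φᵢ xᵢ) ^ p = (∑ φᵢ xᵢ) ^ p = 1`, and the swap rule turns this into the reconstruction formula
`t = ∑ Φᵢ t • xᵢ ^ ⊗p` on `L^{⊗p}`, where `Φᵢ = φᵢ^{⊗p}`. Since `Φᵢ ((x + y) ^ ⊗p) = (φᵢ x + φᵢ y) ^ p`,
the formula makes `x ↦ x ^ ⊗p` additive, hence Frobenius-semilinear, so it induces
`s ⊗ x ↦ s • x ^ ⊗p` on the base change; `t ↦ ∑ Φᵢ t ⊗ xᵢ` is its inverse.
-/

open Module PiTensorProduct

namespace Module.Invertible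

variable {R M : Type*} [CommSemiring R] [AddCommMonoid M] [Module R M] [Module.Invertible R M]

theorem apply_smul_comm (φ : Dual R M) (x y : M) : φ x • y = φ y • x := by
  simpa using congrArg ((TensorProduct.lid R M).toLinearMap ∘ₗ TensorProduct.map φ LinearMap.id)
    (tmul_comm (R := R) (m₁ := x) (m₂ := y))

variable (R M) in
theorem exists_finset_sum_apply_eq_one : ∃ S : Finset (Dual R M × M), ∑ i ∈ S, i.1 i.2 = 1 := by
  obtain ⟨S, hS⟩ := TensorProduct.exists_finset ((linearEquiv R M).symm 1)
  refine ⟨S, ?_⟩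
  simpa [map_sum, linearEquiv] using congrArg (linearEquiv R M) hS.symm

theorem sum_apply_smul {S : Finset (Dual R M × M)} (hS : ∑ i ∈ S, i.1 i.2 = 1) (x : M) :
    ∑ i ∈ S, i.1 x • i.2 = x := by
  simp_rw [apply_smul_comm _ x, ← Finset.sum_smul, hS, one_smul]

end Module.Invertible

namespace Module.Dual

variable {R M : Type*} [CommSemiring R] [AddCommMonoid M] [Module R M]

noncomputable def tpow (φ : Dual R M) (n : ℕ) : Dual R (⨂[R] _ : Fin n, M) :=
  lift ((MultilinearMap.mkPiAlgebra R (Fin n) R).compLinearMap fun _ ↦ φ)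

@[simp]
theorem tpow_tprod (φ : Dual R M) {n : ℕ} (x : Fin n → M) :
    φ.tpow n (tprod R x) = ∏ i, φ (x i) := by
  simp [tpow]

theorem tpow_tprod_const (φ : Dual R M) {n : ℕ} (x : M) :
    φ.tpow n (tprod R fun _ : Fin n ↦ x) = φ x ^ n := by
  simp

end Module.Dual

namespace PiTensorProduct

variable {R M : Type*} [CommSemiring R] [AddCommMonoid M] [Module R M]

theorem tprod_const_smul {n : ℕ} (r : R) (x : M) :
    tprod R (fun _ : Fin n ↦ r • x) = r ^ n • tprod R fun _ ↦ x := by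
  simpa using (PiTensorProduct.tprod R).map_smul_univ (fun _ : Fin n ↦ r) fun _ ↦ x

variable [Module.Invertible R M]

theorem pow_smul_tprod_eq {n : ℕ} (φ : Dual R M) (x : M) (y : Fin n → M) :
    φ x ^ n • tprod R y = (∏ i, φ (y i)) • tprod R fun _ ↦ x := by
  have h := (PiTensorProduct.tprod R).map_smul_univ (fun _ ↦ φ x) y
  simp only [Finset.prod_const, Finset.card_univ, Fintype.card_fin,
    Invertible.apply_smul_comm φ x] at h
  rw [← h, (PiTensorProduct.tprod R).map_smul_univ]

theorem sum_tpow_smul_tprod_const {n : ℕ} {S : Finset (Dual R M × M)}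
    (hS : ∑ i ∈ S, i.1 i.2 ^ n = 1) (t : ⨂[R] _ : Fin n, M) :
    ∑ i ∈ S, i.1.tpow n t • tprod R (fun _ ↦ i.2) = t := by
  suffices h : ∑ i ∈ S, (i.1.tpow n).smulRight (tprod R fun _ ↦ i.2) = LinearMap.id from
    by simpa using LinearMap.congr_fun h t
  ext y
  simp [← pow_smul_tprod_eq, ← Finset.sum_smul, hS]

end PiTensorProduct

section Frobenius

variable {R : Type*} [CommRing R] {p : ℕ}

@[simp]
theorem pthPowerHom_apply (hp : p.Prime) (hchar : (p : R) = 0) (x : R) :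
    pthPowerHom R p hp hchar x = x ^ p :=
  rfl

theorem sum_pow_eq_one_of_sum_eq_one (hp : p.Prime) (hchar : (p : R) = 0) {ι : Type*}
    {s : Finset ι} {a : ι → R} (ha : ∑ i ∈ s, a i = 1) : ∑ i ∈ s, a i ^ p = 1 := by
  simpa [ha] using (map_sum (pthPowerHom R p hp hchar) a s).symm

namespace PiTensorProduct

variable {M : Type*} [AddCommGroup M] [Module R M] [Module.Invertible R M]

theorem tprod_const_add (hp : p.Prime) (hchar : (p : R) = 0) (x y : M) :
    tprod R (fun _ : Fin p ↦ x + y) = (tprod R fun _ ↦ x) + tprod R fun _ ↦ y := by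
  obtain ⟨S, hS⟩ := Invertible.exists_finset_sum_apply_eq_one R M
  have hS' := sum_pow_eq_one_of_sum_eq_one hp hchar hS
  rw [← sum_tpow_smul_tprod_const hS' (tprod R fun _ ↦ x + y),
    ← sum_tpow_smul_tprod_const hS' (tprod R fun _ ↦ x),
    ← sum_tpow_smul_tprod_const hS' (tprod R fun _ ↦ y), ← Finset.sum_add_distrib]
  refine Finset.sum_congr rfl fun i _ ↦ ?_
  simp only [Dual.tpow_tprod_const, map_add, ← add_smul]
  congr 1
  simpa using map_add (pthPowerHom R p hp hchar) (i.1 x) (i.1 y)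

noncomputable def frobeniusTprod (hp : p.Prime) (hchar : (p : R) = 0) :
    M →ₛₗ[pthPowerHom R p hp hchar] ⨂[R] _ : Fin p, M where
  toFun x := tprod R fun _ ↦ x
  map_add' := tprod_const_add hp hchar
  map_smul' := tprod_const_smul

end PiTensorProduct

end Frobenius

section SemilinearBaseChange

variable {R A L N : Type*} [CommSemiring R] [CommSemiring A] [Algebra R A]
  [AddCommMonoid L] [Module R L] [AddCommMonoid N] [Module A N]

noncomputable def liftBaseChangeOfSemilinear (q : L →ₛₗ[algebraMap R A] N) :
    A ⊗[R] L →ₗ[A] N where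
  toFun := TensorProduct.liftAddHom ((smulAddHom A N).compl₂ q.toAddMonoidHom) fun r s l ↦ by
    simp [q.map_smulₛₗ, smul_smul, Algebra.smul_def, mul_comm]
  map_add' := map_add _
  map_smul' s z := by
    induction z using TensorProduct.induction_on with
    | zero => simp
    | tmul s' l => simp [TensorProduct.smul_tmul', mul_smul]
    | add z z' hz hz' => simp_all [smul_add]

@[simp]
theorem liftBaseChangeOfSemilinear_tmul (q : L →ₛₗ[algebraMap R A] N) (s : A) (l : L) :
    liftBaseChangeOfSemilinear q (s ⊗ₜ l) = s • q l :=
  rfl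

theorem sum_algebraMap_tmul_eq {ι : Type*} {s : Finset ι} {φ : ι → Dual R L} {x : ι → L} {l : L}
    (hl : ∑ i ∈ s, φ i l • x i = l) : ∑ i ∈ s, algebraMap R A (φ i l) ⊗ₜ[R] x i = 1 ⊗ₜ l := by
  simp_rw [Algebra.algebraMap_eq_smul_one, TensorProduct.smul_tmul, ← TensorProduct.tmul_sum, hl]

theorem liftBaseChangeOfSemilinear_bijective (q : L →ₛₗ[algebraMap R A] N) {ι : Type*}
    (s : Finset ι) (c : ι → N →ₗ[A] A) (x : ι → L) (hN : ∀ t, ∑ i ∈ s, c i t • q (x i) = t)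
    (hL : ∀ l, ∑ i ∈ s, c i (q l) ⊗ₜ[R] x i = 1 ⊗ₜ l) :
    Function.Bijective (liftBaseChangeOfSemilinear q) := by
  let γ : N →ₗ[A] A ⊗[R] L := ∑ i ∈ s, LinearMap.toSpanSingleton A _ (1 ⊗ₜ x i) ∘ₗ c i
  have hγ (t : N) : γ t = ∑ i ∈ s, c i t ⊗ₜ x i := by
    simp [γ, TensorProduct.smul_tmul']
  refine Function.bijective_iff_has_inverse.mpr ⟨γ, fun z ↦ ?_, fun t ↦ by simp [hγ, hN]⟩
  induction z using TensorProduct.induction_on with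
  | zero => simp
  | tmul s' l =>
    rw [liftBaseChangeOfSemilinear_tmul, map_smul, hγ, hL, TensorProduct.smul_tmul', smul_eq_mul,
      mul_one]
  | add z z' hz hz' => rw [map_add, map_add, hz, hz']

end SemilinearBaseChange

/-- For a commutative ring `R` of characteristic `p` (a prime, with `p • 1 = 0` in `R`),
the base change of any invertible `R`-module `L` along the Frobenius endomorphism
`x ↦ x ^ p` of `R` is `R`-linearly isomorphic to the `p`-fold tensor power of `L` over `R`. -/
theorem base_change_along_frobenius (R : Type u) [CommRing R]
    (p : ℕ) (hp : p.Prime) (hchar : (p : R) = 0)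
    (L : Type u) [AddCommGroup L] [Module R L] (hL : IsInvertibleModule R L) :
    letI : Module (Along (pthPowerHom R p hp hchar)) (⨂[R] (_ : Fin p), L) :=
      inferInstanceAs (Module R (⨂[R] (_ : Fin p), L))
    Nonempty ((Along (pthPowerHom R p hp hchar) ⊗[R] L) ≃ₗ[Along (pthPowerHom R p hp hchar)]
      (⨂[R] (_ : Fin p), L)) := by
  let _ : Module (Along (pthPowerHom R p hp hchar)) (⨂[R] (_ : Fin p), L) :=
    inferInstanceAs (Module R (⨂[R] (_ : Fin p), L))
  obtain ⟨M, _, _, ⟨e⟩⟩ := hL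
  have : Module.Invertible R L := .left e
  obtain ⟨S, hS⟩ := Invertible.exists_finset_sum_apply_eq_one R L
  refine ⟨.ofBijective (liftBaseChangeOfSemilinear (frobeniusTprod hp hchar))
    (liftBaseChangeOfSemilinear_bijective _ S (fun i ↦ i.1.tpow p) Prod.snd
      (sum_tpow_smul_tprod_const (sum_pow_eq_one_of_sum_eq_one hp hchar hS)) fun l ↦ ?_)⟩
  convert sum_algebraMap_tmul_eq (A := Along (pthPowerHom R p hp hchar))
    (Invertible.sum_apply_smul hS l) using 3
  exact Dual.tpow_tprod_const (R := R) _ l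
end

section
/- Let κ be a perfect commutative ring of characteristic p, i.e., p·1 = 0 in κ and the Frobenius endomorphism x ↦ x^p is bijective. If L is an invertible κ-module whose p-fold tensor power L^{⊗p} over κ is κ-linearly isomorphic to κ, then L itself is κ-linearly isomorphic to κ. -/
/-!
For an invertible module `L`, every functional `f` satisfies `f x • y = f y • x`, and the values
`f x` generate the unit ideal, so an equation in `κ`, or membership in a submodule, may be checked
after multiplying by all the `f x ^ p`. For `ψ x = e (x ⊗ ⋯ ⊗ x)` this gives
`f l ^ p * ψ x = f x ^ p * ψ l`, whence `ψ` is additive in characteristic `p`; likewise the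
diagonal tensors span `L^{⊗p}`, so the values of `ψ` generate `κ`. Thus `ψ` is
Frobenius-semilinear and its `p`-th root is a linear surjection `L → κ`, an isomorphism because
`κ` is invertible.
-/

open scoped TensorProduct

universe u

open Module

theorem add_pow_prime_of_natCast_eq_zero {R : Type*} [CommSemiring R] {p : ℕ}
    (hp : p.Prime) (hchar : (p : R) = 0) (x y : R) : (x + y) ^ p = x ^ p + y ^ p := by
  simp [add_pow_prime_eq hp, hchar]

theorem PiTensorProduct.tprod_const_smul_s12 {R M ι : Type*} [CommSemiring R] [AddCommMonoid M]
    [Module R M] [Fintype ι] (r : R) (x : M) :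
    tprod R (fun _ : ι => r • x) = r ^ Fintype.card ι • tprod R (fun _ : ι => x) := by
  rw [MultilinearMap.map_smul_univ, Finset.prod_const, Finset.card_univ]

theorem exists_linearMap_pow_apply_eq {R M : Type*} [CommSemiring R] [AddCommMonoid M]
    [Module R M] {p : ℕ} (hp : p.Prime) (hchar : (p : R) = 0)
    (hperf : Function.Bijective (fun x : R => x ^ p)) {ψ : M → R}
    (hadd : ∀ x y, ψ (x + y) = ψ x + ψ y)
    (hsmul : ∀ (r : R) x, ψ (r • x) = r ^ p * ψ x) :
    ∃ χ : M →ₗ[R] R, ∀ x, χ x ^ p = ψ x := by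
  let root := (Equiv.ofBijective _ hperf).symm
  have hroot (a : R) : root a ^ p = a := (Equiv.ofBijective _ hperf).apply_symm_apply a
  refine ⟨{ toFun := fun x => root (ψ x), map_add' := ?_, map_smul' := ?_ }, fun x => hroot _⟩
  · intro x y
    apply hperf.injective
    simp only [hroot, hadd, add_pow_prime_of_natCast_eq_zero hp hchar]
  · intro r x
    apply hperf.injective
    simp only [hroot, hsmul, smul_eq_mul, mul_pow, RingHom.id_apply]

namespace Module.Invertible

section CommSemiring

variable {R M : Type*} [CommSemiring R] [AddCommMonoid M] [Module R M] [Module.Invertible R M]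

theorem dual_apply_smul_comm (f : Dual R M) (x y : M) : f x • y = f y • x := by
  simpa using congrArg (TensorProduct.lid R M ∘ f.rTensor M) (tmul_comm (m₁ := x) (m₂ := y))

theorem span_range_dual_apply_eq_top :
    Ideal.span (Set.range fun fx : Dual R M × M => fx.1 fx.2) = ⊤ := by
  obtain ⟨s, hs⟩ := TensorProduct.exists_finset ((linearEquiv R M).symm 1)
  have h1 : ∑ i ∈ s, i.1 i.2 = 1 := by
    simpa [linearEquiv] using congrArg (linearEquiv R M) hs.symm
  rw [Ideal.eq_top_iff_one, ← h1]
  exact Ideal.sum_mem _ fun i _ => Ideal.subset_span ⟨i, rfl⟩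

theorem mem_of_forall_dual_apply_pow_smul_mem {P : Type*} [AddCommMonoid P] [Module R P]
    (N : Submodule R P) (n : ℕ) {t : P} (h : ∀ (f : Dual R M) (x : M), f x ^ n • t ∈ N) :
    t ∈ N := by
  have hle : Ideal.span ((· ^ n) '' Set.range fun fx : Dual R M × M => fx.1 fx.2) ≤
      N.comap (LinearMap.toSpanSingleton R P t) := by
    rw [Ideal.span_le]
    rintro _ ⟨_, ⟨⟨f, x⟩, rfl⟩, rfl⟩
    exact h f x
  rw [Ideal.span_pow_eq_top _ span_range_dual_apply_eq_top] at hle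
  simpa using hle (Submodule.mem_top (x := 1))

theorem dual_apply_pow_smul_tprod {ι : Type*} [Fintype ι] (f : Dual R M) (x : M) (v : ι → M) :
    f x ^ Fintype.card ι • PiTensorProduct.tprod R v =
      (∏ i, f (v i)) • PiTensorProduct.tprod R (fun _ : ι => x) := by
  rw [← Finset.card_univ, ← Finset.prod_const, ← MultilinearMap.map_smul_univ,
    ← MultilinearMap.map_smul_univ]
  simp_rw [dual_apply_smul_comm f x]

theorem span_tprod_const_eq_top {ι : Type*} [Fintype ι] :
    Submodule.span R (Set.range fun x : M => PiTensorProduct.tprod R fun _ : ι => x) = ⊤ := by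
  rw [eq_top_iff]
  rintro t -
  induction t using PiTensorProduct.induction_on with
  | smul_tprod r v =>
    refine Submodule.smul_mem _ r (mem_of_forall_dual_apply_pow_smul_mem (M := M) _
      (Fintype.card ι) fun f x => ?_)
    rw [dual_apply_pow_smul_tprod]
    exact Submodule.smul_mem _ _ (Submodule.subset_span ⟨x, rfl⟩)
  | add t₁ t₂ h₁ h₂ => exact Submodule.add_mem _ h₁ h₂

end CommSemiring

variable {R M : Type*} [CommRing R] [AddCommGroup M] [Module R M] [Module.Invertible R M]

theorem map_add_of_map_smul_eq_pow_mul {p : ℕ} (hp : p.Prime) (hchar : (p : R) = 0)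
    {ψ : M → R} (hψ : ∀ (r : R) (x : M), ψ (r • x) = r ^ p * ψ x) (x y : M) :
    ψ (x + y) = ψ x + ψ y := by
  have hswap (f : Dual R M) (l z : M) : f l ^ p * ψ z = f z ^ p * ψ l := by
    rw [← hψ, ← hψ, dual_apply_smul_comm]
  rw [← sub_eq_zero, ← Submodule.mem_bot R]
  refine mem_of_forall_dual_apply_pow_smul_mem (M := M) ⊥ p fun f l => ?_
  rw [Submodule.mem_bot, smul_eq_mul, mul_sub, mul_add, hswap f l (x + y), hswap f l x, hswap f l y,
    map_add, add_pow_prime_of_natCast_eq_zero hp hchar]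
  ring

end Module.Invertible

/-- If `κ` is a perfect commutative ring of characteristic `p` (i.e. `p • 1 = 0` in `κ` and the
Frobenius `x ↦ x ^ p` is bijective), and `L` is an invertible `κ`-module whose `p`-fold tensor
power over `κ` is trivial (isomorphic to `κ`), then `L` is itself trivial. -/
theorem trivial_of_pth_power_trivial (p : ℕ) (hp : p.Prime)
    (κ : Type u) [CommRing κ] (hchar : (p : κ) = 0)
    (hperf : Function.Bijective (fun x : κ => x ^ p))
    (L : Type u) [AddCommGroup L] [Module κ L] (hL : IsInvertibleModule κ L)
    (h : Nonempty ((⨂[κ] (_ : Fin p), L) ≃ₗ[κ] κ)) :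
    Nonempty (L ≃ₗ[κ] κ) := by
  obtain ⟨M, _, _, ⟨eM⟩⟩ := hL
  have : Module.Invertible κ L := .left eM
  obtain ⟨e⟩ := h
  let ψ : L → κ := fun x => e (PiTensorProduct.tprod κ fun _ : Fin p => x)
  have hψ_smul (r : κ) (x : L) : ψ (r • x) = r ^ p * ψ x := by
    simp [ψ, PiTensorProduct.tprod_const_smul_s12]
  obtain ⟨χ, hχ⟩ := exists_linearMap_pow_apply_eq hp hchar hperf
    (Module.Invertible.map_add_of_map_smul_eq_pow_mul hp hchar hψ_smul) hψ_smul
  have hspan : Ideal.span (Set.range ψ) = ⊤ := by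
    rw [Set.range_comp' e, Ideal.span, Submodule.span_image_linearEquiv,
      Module.Invertible.span_tprod_const_eq_top, Submodule.map_top, LinearEquiv.range]
  have hχ_surj : Function.Surjective χ := by
    rw [← LinearMap.range_eq_top, eq_top_iff, ← hspan, Ideal.span_le]
    rintro _ ⟨x, rfl⟩
    rw [← hχ]
    exact Ideal.pow_mem_of_mem _ (LinearMap.mem_range_self χ x) p hp.pos
  exact ⟨.ofBijective χ (Module.Invertible.bijective_of_surjective hχ_surj)⟩
end
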